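/- A finite simple graph G is an iso-unique Grundy domination graph if and only if each connected component of G is a complete graph. -/

import Mathlib

/-- A closed neighborhood sequence in `G`: a list of distinct vertices such that each
vertex footprints some vertex of its closed neighborhood not contained in the closed
neighborhood of any earlier vertex. -/
def IsClosedNbrSeq {V : Type*} (G : SimpleGraph V) (l : List V) : Prop :=
  l.Nodup ∧ ∀ i : Fin l.length, ∃ w : V, (w = l.get i ∨ G.Adj (l.get i) w) ∧
    ∀ j : Fin l.length, (j : ℕ) < (i : ℕ) → w ≠ l.get j ∧ ¬ G.Adj (l.get j) w

/-- A Grundy dominating sequence: a closed neighborhood sequence of maximum length. -/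
def IsGrundyDomSeq {V : Type*} (G : SimpleGraph V) (l : List V) : Prop :=
  IsClosedNbrSeq G l ∧ ∀ l' : List V, IsClosedNbrSeq G l' → l'.length ≤ l.length

/-- A Grundy dominating set of `G`: the set of vertices of some Grundy dominating
sequence of `G`. -/
def IsGrundyDomSet {V : Type*} (G : SimpleGraph V) (A : Set V) : Prop :=
  ∃ l : List V, IsGrundyDomSeq G l ∧ {v : V | v ∈ l} = A

/-- `G` is an iso-unique Grundy domination graph: any two Grundy dominating sets are
mapped to each other by some graph automorphism. -/
def IsoUniqueGrundyDom {V : Type*} (G : SimpleGraph V) : Prop :=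
  ∀ A B : Set V, IsGrundyDomSet G A → IsGrundyDomSet G B →
    ∃ φ : G ≃g G, ⇑φ '' A = B

/-!
If every component is complete, a closed neighborhood sequence meets each component at most
once, and a Grundy dominating one meets each component exactly once. Swapping, inside every
component, the vertex of one Grundy dominating set with that of the other is an automorphism.

Conversely, moving the vertices of a Grundy dominating sequence that lie in a given component to
the front gives a Grundy dominating sequence `v₁, …, vₙ` with `v₁` in that component; let
`w₁, …, wₙ` be its footprints. The reversed footprints `P = wₙ, …, w₂` form a closed neighborhood
sequence of length `n - 1` leaving `v₁` undominated, so `P` followed by any vertex `t` with an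
undominated closed neighbor is again Grundy dominating. Iso-uniqueness yields an automorphism
mapping `P ∪ {t}` onto `P ∪ {v₁}`; since `v₁` has no neighbor in `P`, counting edges shows that
neither does `t`. Hence the undominated vertices are closed under adjacency, so they contain the
component of `v₁`, and they are pairwise adjacent, as two non-adjacent ones would extend `P` to
a closed neighborhood sequence of length `n + 1`.
-/

namespace SimpleGraph

variable {V : Type*} {G : SimpleGraph V} {u v w x : V}

variable (G) in
def closedNbhd (v : V) : Set V := insert v (G.neighborSet v)

theorem mem_closedNbhd : w ∈ G.closedNbhd v ↔ w = v ∨ G.Adj v w := Iff.rfl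

theorem self_mem_closedNbhd (v : V) : v ∈ G.closedNbhd v := Or.inl rfl

theorem mem_closedNbhd_comm : w ∈ G.closedNbhd v ↔ v ∈ G.closedNbhd w := by
  simp only [mem_closedNbhd, eq_comm, adj_comm]

theorem Reachable.of_mem_closedNbhd (h : w ∈ G.closedNbhd v) : G.Reachable v w := by
  rcases h with rfl | h
  exacts [Reachable.refl _, h.reachable]

theorem Reachable.mem_of_adj_closed {S : Set V} (hS : ∀ ⦃a b⦄, a ∈ S → G.Adj a b → b ∈ S)
    (h : G.Reachable u v) (hu : u ∈ S) : v ∈ S := by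
  obtain ⟨p⟩ := h
  induction p with
  | nil => exact hu
  | cons h _ ih => exact ih (hS hu h)

variable (G) in
def dominatedSet (l : List V) : Set V := {w | ∃ v ∈ l, w ∈ G.closedNbhd v}

theorem mem_dominatedSet_append_singleton {l : List V} :
    w ∈ G.dominatedSet (l ++ [x]) ↔ w ∈ G.dominatedSet l ∨ w ∈ G.closedNbhd x := by
  simp [dominatedSet, or_and_right, exists_or]

/-- A closed neighborhood sequence together with chosen footprints: pairs `(vᵢ, wᵢ)` with
`wᵢ ∈ N[vᵢ] \ (N[v₁] ∪ ⋯ ∪ N[vᵢ₋₁])`. -/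
def IsFootprintList (G : SimpleGraph V) (z : List (V × V)) : Prop :=
  (∀ p ∈ z, p.2 ∈ G.closedNbhd p.1) ∧ z.Pairwise fun p q => q.2 ∉ G.closedNbhd p.1

namespace IsFootprintList

variable {z : List (V × V)}

theorem cons_iff {p : V × V} :
    G.IsFootprintList (p :: z) ↔
      p.2 ∈ G.closedNbhd p.1 ∧ (∀ q ∈ z, q.2 ∉ G.closedNbhd p.1) ∧ G.IsFootprintList z := by
  simp only [IsFootprintList, List.mem_cons, forall_eq_or_imp, List.pairwise_cons]
  tauto

theorem nodup_map_fst (hz : G.IsFootprintList z) : (z.map Prod.fst).Nodup := by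
  refine List.pairwise_map.2 (hz.2.imp_of_mem fun {p q} _ hq hpq heq => hpq ?_)
  exact heq ▸ hz.1 q hq

theorem append_singleton (hz : G.IsFootprintList z) (hw : w ∈ G.closedNbhd x)
    (hwz : w ∉ G.dominatedSet (z.map Prod.fst)) : G.IsFootprintList (z ++ [(x, w)]) := by
  refine ⟨fun p hp => ?_, List.pairwise_append.2 ⟨hz.2, List.pairwise_singleton _ _, ?_⟩⟩
  · rcases List.mem_append.1 hp with hp | hp
    exacts [hz.1 p hp, List.mem_singleton.1 hp ▸ hw]
  · rintro p hp q hq hwp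
    rw [List.mem_singleton.1 hq] at hwp
    exact hwz ⟨p.1, List.mem_map_of_mem hp, hwp⟩

theorem reverse_map_swap (hz : G.IsFootprintList z) :
    G.IsFootprintList (z.reverse.map Prod.swap) := by
  refine ⟨?_, ?_⟩
  · simp only [List.mem_map, List.mem_reverse]
    rintro _ ⟨p, hp, rfl⟩
    exact mem_closedNbhd_comm.1 (hz.1 p hp)
  · rw [List.pairwise_map, List.pairwise_reverse]
    exact hz.2.imp fun h h' => h (mem_closedNbhd_comm.1 h')

theorem filter_append_filter {b : V → Bool} (hb : ∀ ⦃u w⦄, G.Adj u w → b u = b w)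
    (hz : G.IsFootprintList z) :
    G.IsFootprintList (z.filter (fun p => b p.1) ++ z.filter (fun p => !b p.1)) := by
  have hbN {u w : V} (h : w ∈ G.closedNbhd u) : b w = b u := by
    rcases h with rfl | h
    exacts [rfl, (hb h).symm]
  refine ⟨fun p hp => ?_, ?_⟩
  · rcases List.mem_append.1 hp with hp | hp
    exacts [hz.1 p (List.mem_of_mem_filter hp), hz.1 p (List.mem_of_mem_filter hp)]
  refine List.pairwise_append.2 ⟨hz.2.filter _, hz.2.filter _, fun p hp q hq hqp => ?_⟩
  rw [List.mem_filter] at hp hq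
  simp [← hbN (hz.1 q hq.1), hbN hqp, hp.2] at hq

end IsFootprintList

variable (G) in
def adjPairs (A : Set V) : Set (V × V) := {p | p.1 ∈ A ∧ p.2 ∈ A ∧ G.Adj p.1 p.2}

theorem adjPairs_image (φ : G ≃g G) (A : Set V) :
    G.adjPairs (φ '' A) = Prod.map φ φ '' G.adjPairs A := by
  ext ⟨x, y⟩
  obtain ⟨a, rfl⟩ := φ.surjective x
  obtain ⟨b, rfl⟩ := φ.surjective y
  simp [adjPairs, φ.injective.eq_iff, φ.map_adj_iff]

theorem adjPairs_insert_of_forall_not_adj {A : Set V} (hv : ∀ s ∈ A, ¬G.Adj v s) :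
    G.adjPairs (insert v A) = G.adjPairs A := by
  ext ⟨x, y⟩
  simp only [adjPairs, Set.mem_insert_iff, Set.mem_ofPred_eq]
  constructor
  · rintro ⟨rfl | hx, rfl | hy, h⟩
    exacts [absurd h (G.irrefl), absurd h (hv y hy), absurd h.symm (hv x hx), ⟨hx, hy, h⟩]
  · exact fun ⟨hx, hy, h⟩ => ⟨Or.inr hx, Or.inr hy, h⟩

theorem adjPairs_ssubset_insert {A : Set V} {t s : V} (ht : t ∉ A) (hs : s ∈ A)
    (h : G.Adj t s) : G.adjPairs A ⊂ G.adjPairs (insert t A) := by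
  refine (Set.ssubset_iff_of_subset fun p hp => ?_).2 ⟨(t, s), ?_, fun h' => ht h'.1⟩
  exacts [⟨Or.inr hp.1, Or.inr hp.2.1, hp.2.2⟩, ⟨Or.inl rfl, Or.inr hs, h⟩]

theorem not_adj_of_image_insert_eq [Finite V] {A : Set V} {t : V} (φ : G ≃g G)
    (hφ : φ '' insert t A = insert v A) (ht : t ∉ A) (hv : ∀ s ∈ A, ¬G.Adj v s) :
    ∀ s ∈ A, ¬G.Adj t s := by
  intro s hs h
  have hinj : Function.Injective (Prod.map φ φ) := φ.injective.prodMap φ.injective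
  have := Set.ncard_lt_ncard (adjPairs_ssubset_insert ht hs h) (Set.toFinite _)
  rw [← Set.ncard_image_of_injective (G.adjPairs (insert t A)) hinj, ← adjPairs_image, hφ,
    adjPairs_insert_of_forall_not_adj hv] at this
  exact this.false

end SimpleGraph

open SimpleGraph

section

variable {V : Type*} {G : SimpleGraph V} {l l' : List V} {v w x : V}

theorem isClosedNbrSeq_iff :
    IsClosedNbrSeq G l ↔ ∃ z : List (V × V), z.map Prod.fst = l ∧ G.IsFootprintList z := by
  constructor
  · rintro ⟨-, h⟩
    choose ws hws hws' using h
    refine ⟨List.ofFn fun i => (l.get i, ws i), by simp [Function.comp_def], ?_, ?_⟩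
    · simp only [List.mem_ofFn, forall_exists_index]
      rintro _ i rfl
      exact hws i
    · refine List.pairwise_ofFn.2 fun i j hij => ?_
      simpa [mem_closedNbhd, not_or] using hws' j i hij
  · rintro ⟨z, rfl, hz⟩
    refine ⟨hz.nodup_map_fst, fun i => ⟨(z[i.1]'(by simpa using i.2)).2, ?_, fun j hji => ?_⟩⟩
    · simpa [mem_closedNbhd] using hz.1 _ (List.getElem_mem _)
    · have := List.pairwise_iff_getElem.1 hz.2 j i (by simpa using j.2) (by simpa using i.2) hji
      simpa [mem_closedNbhd, not_or] using this

theorem IsClosedNbrSeq.append_singleton (hl : IsClosedNbrSeq G l) (hw : w ∈ G.closedNbhd x)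
    (hwl : w ∉ G.dominatedSet l) : IsClosedNbrSeq G (l ++ [x]) := by
  obtain ⟨z, rfl, hz⟩ := isClosedNbrSeq_iff.1 hl
  exact isClosedNbrSeq_iff.2 ⟨z ++ [(x, w)], by simp, hz.append_singleton hw hwl⟩

theorem IsGrundyDomSeq.mem_dominatedSet (hl : IsGrundyDomSeq G l) (x : V) :
    x ∈ G.dominatedSet l := by
  by_contra hx
  simpa using hl.2 _ (hl.1.append_singleton (self_mem_closedNbhd x) hx)

theorem IsGrundyDomSeq.of_length_eq (hl : IsGrundyDomSeq G l) (hl' : IsClosedNbrSeq G l')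
    (hlen : l'.length = l.length) : IsGrundyDomSeq G l' :=
  ⟨hl', hlen ▸ hl.2⟩

theorem exists_isGrundyDomSeq [Finite V] (G : SimpleGraph V) : ∃ l, IsGrundyDomSeq G l := by
  have := Fintype.ofFinite V
  let lengths : Set ℕ := {n | ∃ l, IsClosedNbrSeq G l ∧ l.length = n}
  have hbdd : BddAbove lengths :=
    ⟨Fintype.card V, by rintro _ ⟨l, hl, rfl⟩; exact hl.1.length_le_card⟩
  have hnil : IsClosedNbrSeq G [] := isClosedNbrSeq_iff.2 ⟨[], rfl, by simp [IsFootprintList]⟩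
  obtain ⟨l, hl, hlen⟩ := Nat.sSup_mem (s := lengths) ⟨0, [], hnil, rfl⟩ hbdd
  exact ⟨l, hl, fun l' hl' => hlen ▸ le_csSup hbdd ⟨l', hl', rfl⟩⟩

section CompleteComponents

variable (hcc : ∀ u v : V, G.Reachable u v → u ≠ v → G.Adj u v)
include hcc

theorem adj_iff_connectedComponentMk_eq {u v : V} :
    G.Adj u v ↔ G.connectedComponentMk u = G.connectedComponentMk v ∧ u ≠ v := by
  rw [ConnectedComponent.eq]
  exact ⟨fun h => ⟨h.reachable, h.ne⟩, fun h => hcc u v h.1 h.2⟩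

theorem mem_closedNbhd_iff_reachable : w ∈ G.closedNbhd v ↔ G.Reachable v w := by
  refine ⟨Reachable.of_mem_closedNbhd, fun h => ?_⟩
  by_cases hwv : w = v
  exacts [Or.inl hwv, Or.inr (hcc v w h (Ne.symm hwv))]

theorem IsClosedNbrSeq.nodup_map_connectedComponentMk (hl : IsClosedNbrSeq G l) :
    (l.map G.connectedComponentMk).Nodup := by
  obtain ⟨z, rfl, hz⟩ := isClosedNbrSeq_iff.1 hl
  rw [List.map_map, List.Nodup, List.pairwise_map]
  refine hz.2.imp_of_mem fun {p q} _ hq hpq heq => hpq ?_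
  rw [mem_closedNbhd_iff_reachable hcc]
  exact (ConnectedComponent.exact heq).trans (Reachable.of_mem_closedNbhd (hz.1 q hq))

theorem IsGrundyDomSet.exists_range_eq {A : Set V} (hA : IsGrundyDomSet G A) :
    ∃ r : G.ConnectedComponent → V,
      (∀ c, G.connectedComponentMk (r c) = c) ∧ Set.range r = A := by
  obtain ⟨l, hl, rfl⟩ := hA
  have hmem (c : G.ConnectedComponent) : ∃ a ∈ l, G.connectedComponentMk a = c := by
    induction c using ConnectedComponent.ind with | h x => ?_
    obtain ⟨a, ha, hxa⟩ := hl.mem_dominatedSet x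
    exact ⟨a, ha, ConnectedComponent.sound (Reachable.of_mem_closedNbhd hxa)⟩
  choose r hrl hr using hmem
  refine ⟨r, hr, Set.Subset.antisymm (Set.range_subset_iff.2 hrl) fun a ha =>
    ⟨G.connectedComponentMk a, ?_⟩⟩
  exact List.inj_on_of_nodup_map (hl.1.nodup_map_connectedComponentMk hcc) (hrl _) ha (hr _)

theorem exists_iso_comp_eq (rA rB : G.ConnectedComponent → V)
    (hA : ∀ c, G.connectedComponentMk (rA c) = c) (hB : ∀ c, G.connectedComponentMk (rB c) = c) :
    ∃ φ : G ≃g G, φ ∘ rA = rB := by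
  classical
  let swapReps (v : V) : V :=
    Equiv.swap (rA (G.connectedComponentMk v)) (rB (G.connectedComponentMk v)) v
  have hcomp (v : V) : G.connectedComponentMk (swapReps v) = G.connectedComponentMk v := by
    simp only [swapReps, Equiv.swap_apply_def]
    split_ifs with h₁ h₂
    exacts [hB _, h₂ ▸ hA _, rfl]
  have hinv : Function.Involutive swapReps := fun v => by
    simp only [swapReps, hcomp, Equiv.swap_apply_self]
  refine ⟨⟨hinv.toPerm, fun {u v} => ?_⟩, funext fun c => ?_⟩
  · simp only [Function.Involutive.coe_toPerm, adj_iff_connectedComponentMk_eq hcc, hcomp,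
      hinv.injective.ne_iff]
  · simp [swapReps, hA]

theorem isoUniqueGrundyDom_of_components_complete : IsoUniqueGrundyDom G := by
  intro A B hA hB
  obtain ⟨rA, hrA, rfl⟩ := hA.exists_range_eq hcc
  obtain ⟨rB, hrB, rfl⟩ := hB.exists_range_eq hcc
  obtain ⟨φ, hφ⟩ := exists_iso_comp_eq hcc rA rB hrA hrB
  exact ⟨φ, by rw [← Set.range_comp, hφ]⟩

end CompleteComponents

theorem exists_isGrundyDomSeq_cons_reachable [Finite V] (G : SimpleGraph V) (x : V) :
    ∃ v w zt, G.IsFootprintList ((v, w) :: zt) ∧ IsGrundyDomSeq G (v :: zt.map Prod.fst) ∧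
      G.Reachable x v := by
  classical
  obtain ⟨l, hl⟩ := exists_isGrundyDomSeq G
  obtain ⟨z, rfl, hz⟩ := isClosedNbrSeq_iff.1 hl.1
  let b (v : V) : Bool := decide (G.Reachable x v)
  have hb : ∀ ⦃u w⦄, G.Adj u w → b u = b w := fun u w h =>
    decide_eq_decide.2 ⟨fun h' => h'.trans h.reachable, fun h' => h'.trans h.reachable.symm⟩
  obtain ⟨a, ha, hxa⟩ := hl.mem_dominatedSet x
  obtain ⟨q, hq, rfl⟩ := List.mem_map.1 ha
  have hqC : q ∈ z.filter (fun p => b p.1) :=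
    List.mem_filter.2 ⟨hq, decide_eq_true (Reachable.of_mem_closedNbhd hxa).symm⟩
  obtain ⟨⟨v, w⟩, zC, hC⟩ := List.exists_cons_of_ne_nil (List.ne_nil_of_mem hqC)
  have hz' := hz.filter_append_filter hb
  have hlen := (List.filter_append_perm (fun p => b p.1) z).length_eq
  have hvC : (v, w) ∈ z.filter (fun p => b p.1) := hC ▸ List.mem_cons_self
  rw [hC, List.cons_append] at hz' hlen
  refine ⟨v, w, _, hz', hl.of_length_eq (isClosedNbrSeq_iff.2 ⟨_, rfl, hz'⟩) ?_, ?_⟩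
  · simpa using hlen
  · simpa [b] using (List.mem_filter.1 hvC).2

section Undominated

variable {P : List V} (hl : IsGrundyDomSeq G l) (hP : IsClosedNbrSeq G P)
  (hlen : P.length + 1 = l.length)
include hl hP hlen

theorem isGrundyDomSeq_append_singleton {t : V} (hw : w ∈ G.closedNbhd t)
    (hwP : w ∉ G.dominatedSet P) : IsGrundyDomSeq G (P ++ [t]) :=
  hl.of_length_eq (hP.append_singleton hw hwP) (by simpa using hlen)

theorem adj_of_notMem_dominatedSet {u u' : V} (hu : u ∉ G.dominatedSet P)
    (hu' : u' ∉ G.dominatedSet P) (hne : u ≠ u') : G.Adj u u' := by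
  by_contra hadj
  have hu'u : u' ∉ G.dominatedSet (P ++ [u]) := by
    rw [mem_dominatedSet_append_singleton, mem_closedNbhd]
    tauto
  have := hl.2 _ ((hP.append_singleton (self_mem_closedNbhd u) hu).append_singleton
    (self_mem_closedNbhd u') hu'u)
  simp only [List.length_append, List.length_singleton] at this
  omega

variable [Finite V] (hG : IsoUniqueGrundyDom G) (hv : v ∉ G.dominatedSet P)
include hG hv

theorem not_adj_of_mem_closedNbhd_notMem_dominatedSet {t : V} (hw : w ∈ G.closedNbhd t)
    (hwP : w ∉ G.dominatedSet P) : ∀ s ∈ P, ¬G.Adj t s := by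
  obtain ⟨φ, hφ⟩ := hG _ _ ⟨_, isGrundyDomSeq_append_singleton hl hP hlen hw hwP, rfl⟩
    ⟨_, isGrundyDomSeq_append_singleton hl hP hlen (self_mem_closedNbhd v) hv, rfl⟩
  have hset (y : V) : {x | x ∈ P ++ [y]} = insert y {x | x ∈ P} := by
    ext
    simp [or_comm]
  rw [hset, hset] at hφ
  exact not_adj_of_image_insert_eq φ hφ (fun htP => hwP ⟨t, htP, hw⟩)
    fun s hs hvs => hv ⟨s, hs, Or.inr hvs.symm⟩

theorem notMem_dominatedSet_of_adj {u r : V} (hu : u ∉ G.dominatedSet P) (hur : G.Adj u r) :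
    r ∉ G.dominatedSet P := by
  rintro ⟨q, hq, hrq⟩
  by_cases hrP : r ∈ P
  · exact not_adj_of_mem_closedNbhd_notMem_dominatedSet hl hP hlen hG hv
      (self_mem_closedNbhd u) hu r hrP hur
  · rcases hrq with rfl | hqr
    · exact hrP hq
    · exact not_adj_of_mem_closedNbhd_notMem_dominatedSet hl hP hlen hG hv
        (Or.inr hur.symm) hu q hq hqr.symm

end Undominated

theorem IsoUniqueGrundyDom.adj_of_reachable [Finite V] (hG : IsoUniqueGrundyDom G) {u v : V}
    (h : G.Reachable u v) (hne : u ≠ v) : G.Adj u v := by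
  obtain ⟨v₁, w₁, zt, hz, hl, hv₁⟩ := exists_isGrundyDomSeq_cons_reachable G u
  obtain ⟨-, hv₁zt, hzt⟩ := IsFootprintList.cons_iff.1 hz
  set P := (zt.reverse.map Prod.swap).map Prod.fst
  have hP : IsClosedNbrSeq G P := isClosedNbrSeq_iff.2 ⟨_, rfl, hzt.reverse_map_swap⟩
  have hlen : P.length + 1 = (v₁ :: zt.map Prod.fst).length := by simp [P]
  have hv₁P : v₁ ∉ G.dominatedSet P := by
    rintro ⟨a, ha, hv₁a⟩
    obtain ⟨q, hq, rfl⟩ : ∃ q ∈ zt, q.2 = a := by simpa [P] using ha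
    exact hv₁zt q hq (mem_closedNbhd_comm.1 hv₁a)
  have hreach (y : V) (hy : G.Reachable v₁ y) : y ∉ G.dominatedSet P :=
    hy.mem_of_adj_closed (S := {y | y ∉ G.dominatedSet P})
      (fun _ _ ha hab => notMem_dominatedSet_of_adj hl hP hlen hG hv₁P ha hab) hv₁P
  exact adj_of_notMem_dominatedSet hl hP hlen (hreach u hv₁.symm) (hreach v (hv₁.symm.trans h)) hne

end

/-- A finite graph is an iso-unique Grundy domination graph iff each of its connected
components is a complete graph. -/
theorem isoUniqueGrundyDom_iff_components_complete {V : Type*} [Fintype V]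
    (G : SimpleGraph V) :
    IsoUniqueGrundyDom G ↔ ∀ u v : V, G.Reachable u v → u ≠ v → G.Adj u v :=
  ⟨fun hG _ _ => hG.adj_of_reachable, isoUniqueGrundyDom_of_components_complete⟩
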